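/- arXiv:1810.02040 — 2 statements merged into one kernel-verified Lean document; each statement's English description precedes it below -/
import Mathlib

section
/- The number of unlabeled interval graphs on n vertices satisfies log I_n ≤ n log n + O(n); explicitly, there is a constant C such that log I_n ≤ n log n + C n for all n ≥ 1. -/
/-!
Sort the intervals of a representation by left endpoint. Two intervals `[a i, b i]`,
`[a j, b j]` meet iff `a j ≤ b i` and `a i ≤ b j`, so the graph only depends on which left
endpoints lie below each right endpoint; after sorting, those left endpoints form an initial
segment, determined by its length. Hence every interval graph on `n` vertices is isomorphic to
one given by a function `Fin n → Fin n`, and `I_n ≤ n ^ n`, i.e. `log I_n ≤ n log n`.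
-/

def IsIntervalGraph {n : ℕ} (G : SimpleGraph (Fin n)) : Prop :=
  ∃ a b : Fin n → ℝ, (∀ i, a i ≤ b i) ∧
    ∀ i j, i ≠ j → (G.Adj i j ↔ (Set.Icc (a i) (b i) ∩ Set.Icc (a j) (b j)).Nonempty)

def intervalIsoSetoid (n : ℕ) : Setoid {G : SimpleGraph (Fin n) // IsIntervalGraph G} where
  r G H := Nonempty (G.1 ≃g H.1)
  iseqv := ⟨fun G => ⟨SimpleGraph.Iso.refl⟩,
    fun ⟨e⟩ => ⟨e.symm⟩, fun ⟨e⟩ ⟨f⟩ => ⟨e.trans f⟩⟩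

/-- The number of unlabeled interval graphs on `n` vertices. -/
noncomputable def intervalGraphCount (n : ℕ) : ℕ :=
  Nat.card (Quotient (intervalIsoSetoid n))

open Set

theorem Monotone.le_iff_lt_card_filter_le {α : Type*} [LinearOrder α] {n : ℕ} {g : Fin n → α}
    (hg : Monotone g) (t : α) (j : Fin n) :
    g j ≤ t ↔ j.val < (Finset.univ.filter fun k => g k ≤ t).card := by
  constructor
  · intro h
    have hsub : Finset.Iic j ⊆ Finset.univ.filter fun k => g k ≤ t := fun k hk => by
      simpa using (hg (Finset.mem_Iic.mp hk)).trans h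
    simpa using Finset.card_le_card hsub
  · intro h
    by_contra! hlt
    have hsub : (Finset.univ.filter fun k => g k ≤ t) ⊆ Finset.Iio j := fun k hk => by
      simp only [Finset.mem_filter, Finset.mem_univ, true_and] at hk
      exact Finset.mem_Iio.mpr (lt_of_not_ge fun hjk => (hlt.trans_le (hg hjk)).not_ge hk)
    simpa using (Finset.card_le_card hsub).trans_lt' h

namespace SimpleGraph

variable {V W α β : Type*} [LinearOrder α] [LinearOrder β]

def ofIntervals (a b : V → α) : SimpleGraph V where
  Adj i j := i ≠ j ∧ (Icc (a i) (b i) ∩ Icc (a j) (b j)).Nonempty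
  symm := ⟨fun _ _ h => ⟨h.1.symm, Set.inter_comm _ _ ▸ h.2⟩⟩
  loopless := ⟨fun _ h => h.1 rfl⟩

@[simp]
theorem ofIntervals_adj {a b : V → α} {i j : V} :
    (ofIntervals a b).Adj i j ↔ i ≠ j ∧ (Icc (a i) (b i) ∩ Icc (a j) (b j)).Nonempty :=
  Iff.rfl

theorem ofIntervals_adj_iff {a b : V → α} (hab : ∀ i, a i ≤ b i) {i j : V} :
    (ofIntervals a b).Adj i j ↔ i ≠ j ∧ a j ≤ b i ∧ a i ≤ b j := by
  simp only [ofIntervals_adj, Icc_inter_Icc, nonempty_Icc, sup_le_iff, le_inf_iff]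
  have := hab i
  have := hab j
  tauto

theorem ofIntervals_congr {a b : V → α} {a' b' : V → β} (hab : ∀ i, a i ≤ b i)
    (hab' : ∀ i, a' i ≤ b' i) (h : ∀ i j, a j ≤ b i ↔ a' j ≤ b' i) :
    ofIntervals a b = ofIntervals a' b' := by
  ext i j
  rw [ofIntervals_adj_iff hab, ofIntervals_adj_iff hab', h i j, h j i]

theorem ofIntervals_comp_strictMono {f : α → β} (hf : StrictMono f) {a b : V → α}
    (hab : ∀ i, a i ≤ b i) : ofIntervals (f ∘ a) (f ∘ b) = ofIntervals a b :=
  ofIntervals_congr (fun i => hf.monotone (hab i)) hab fun _ _ => hf.le_iff_le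

theorem comap_ofIntervals {f : V → W} (hf : f.Injective) (a b : W → α) :
    (ofIntervals a b).comap f = ofIntervals (a ∘ f) (b ∘ f) := by
  ext i j
  simp [hf.ne_iff]

end SimpleGraph

open SimpleGraph

theorem isIntervalGraph_ofIntervals {n : ℕ} {a b : Fin n → ℝ} (hab : ∀ i, a i ≤ b i) :
    IsIntervalGraph (ofIntervals a b) :=
  ⟨a, b, hab, fun _ _ hij => ofIntervals_adj.trans (and_iff_right hij)⟩

theorem IsIntervalGraph.exists_eq_ofIntervals {n : ℕ} {G : SimpleGraph (Fin n)}
    (hG : IsIntervalGraph G) :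
    ∃ a b : Fin n → ℝ, (∀ i, a i ≤ b i) ∧ G = ofIntervals a b := by
  obtain ⟨a, b, hab, hadj⟩ := hG
  refine ⟨a, b, hab, ?_⟩
  ext i j
  by_cases hij : i = j
  · simp [hij]
  · exact (hadj i j hij).trans (ofIntervals_adj.trans (and_iff_right hij)).symm

/-- `c i` is the last vertex reached by the interval of `i`; the `max` makes every `c`
admissible. -/
def reachGraph {n : ℕ} (c : Fin n → Fin n) : SimpleGraph (Fin n) :=
  ofIntervals id fun i => max i (c i)

theorem isIntervalGraph_reachGraph {n : ℕ} (c : Fin n → Fin n) :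
    IsIntervalGraph (reachGraph c) := by
  have hc (i : Fin n) : id i ≤ max i (c i) := le_max_left _ _
  have hcast : StrictMono fun i : Fin n => ((i : ℕ) : ℝ) :=
    Nat.strictMono_cast.comp Fin.val_strictMono
  rw [reachGraph, ← ofIntervals_comp_strictMono hcast hc]
  exact isIntervalGraph_ofIntervals fun i => hcast.monotone (hc i)

/-- After sorting by left endpoint, the left endpoints below `b i` are those of the first
`reach i` vertices, so `c i := reach i - 1` is the last vertex that `i` reaches. -/
theorem ofIntervals_eq_reachGraph_of_monotone {n : ℕ} {a b : Fin n → ℝ}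
    (hab : ∀ i, a i ≤ b i) (ha : Monotone a) : ∃ c, ofIntervals a b = reachGraph c := by
  set reach : Fin n → ℕ := fun i => (Finset.univ.filter fun k => a k ≤ b i).card
  have hreach (i j : Fin n) : a j ≤ b i ↔ j.val < reach i := ha.le_iff_lt_card_filter_le _ j
  have hlt (i : Fin n) : i.val < reach i := (hreach i i).mp (hab i)
  have hle (i : Fin n) : reach i ≤ n := (Finset.card_le_univ _).trans_eq (Fintype.card_fin n)
  refine ⟨fun i => ⟨reach i - 1, by have := hlt i; have := hle i; omega⟩,
    ofIntervals_congr hab (fun i => le_max_left _ _) fun i j => ?_⟩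
  have := hlt i
  simp only [hreach, id, Fin.le_def, Fin.coe_max]
  omega

theorem IsIntervalGraph.exists_iso_reachGraph {n : ℕ} {G : SimpleGraph (Fin n)}
    (hG : IsIntervalGraph G) : ∃ c : Fin n → Fin n, Nonempty (reachGraph c ≃g G) := by
  obtain ⟨a, b, hab, rfl⟩ := hG.exists_eq_ofIntervals
  let σ := Tuple.sort a
  obtain ⟨c, hc⟩ := ofIntervals_eq_reachGraph_of_monotone (a := a ∘ σ) (b := b ∘ σ)
    (fun i => hab (σ i)) (Tuple.monotone_sort a)
  rw [← comap_ofIntervals σ.injective] at hc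
  exact ⟨c, ⟨hc ▸ Iso.comap σ (ofIntervals a b)⟩⟩

theorem surjective_mk_reachGraph (n : ℕ) :
    Function.Surjective fun c : Fin n → Fin n =>
      Quotient.mk (intervalIsoSetoid n) ⟨reachGraph c, isIntervalGraph_reachGraph c⟩ := by
  rintro ⟨G, hG⟩
  obtain ⟨c, ⟨e⟩⟩ := hG.exists_iso_reachGraph
  exact ⟨c, Quotient.sound ⟨e⟩⟩

theorem intervalGraphCount_pos (n : ℕ) : 0 < intervalGraphCount n := by
  have := Finite.of_surjective _ (surjective_mk_reachGraph n)
  have : Nonempty (Quotient (intervalIsoSetoid n)) :=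
    ⟨Quotient.mk _ ⟨reachGraph id, isIntervalGraph_reachGraph id⟩⟩
  exact Nat.card_pos

theorem intervalGraphCount_le_pow (n : ℕ) : intervalGraphCount n ≤ n ^ n := by
  simpa [intervalGraphCount] using Nat.card_le_card_of_surjective _ (surjective_mk_reachGraph n)

theorem log_interval_graph_count_upper :
    ∃ C : ℝ, ∀ n : ℕ, 1 ≤ n →
      Real.log (intervalGraphCount n) ≤ n * Real.log n + C * n := by
  refine ⟨0, fun n _ => ?_⟩
  calc Real.log (intervalGraphCount n)
      ≤ Real.log ((n : ℝ) ^ n) := Real.log_le_log (mod_cast intervalGraphCount_pos n)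
          (mod_cast intervalGraphCount_le_pow n)
    _ = n * Real.log n + 0 * n := by rw [Real.log_pow, zero_mul, add_zero]
end

section
/- The number I_n of unlabeled interval graphs on n vertices satisfies log I_n ≥ n log n - 2n log log n - O(n); explicitly, there exist constants C and N such that for all n ≥ N, log I_n ≥ n log n - 2n log log n - C n. -/
/-!
Fix `k` points `-1, …, -k` on the left, `k` points `1, …, k` on the right, and for every
`f : Fin m → Fin k × Fin k` add `m` intervals `[-(p + 1), q + 1]`, `(p, q) = f j`. The
neighbourhood of the `j`-th interval among the fixed points recovers `f j`, so these `k ^ (2m)`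
interval graphs on `n = 2k + m` labelled vertices are distinct, and at most `n! ≤ n ^ n` of them
are isomorphic to a given one. Hence `I_n · n ^ n ≥ k ^ (2(n - 2k))`, and `k = ⌊n / log n⌋`
gives the bound.
-/

open Set Real

lemma Nat.div_two_le_floor {K : Type*} [Field K] [LinearOrder K] [IsStrictOrderedRing K]
    [FloorSemiring K] {x : K} (hx : 1 ≤ x) : x / 2 ≤ ⌊x⌋₊ := by
  have h1 : (1 : K) ≤ ⌊x⌋₊ := by exact_mod_cast (Nat.one_le_floor_iff x).2 hx
  linarith [Nat.sub_one_lt_floor x]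

section IntervalGraph

variable {V : Type*}

def intervalGraph (a b : V → ℝ) : SimpleGraph V where
  Adj i j := i ≠ j ∧ (Icc (a i) (b i) ∩ Icc (a j) (b j)).Nonempty
  symm := ⟨fun _ _ h => ⟨h.1.symm, by rw [inter_comm]; exact h.2⟩⟩
  loopless := ⟨fun _ h => h.1 rfl⟩

lemma isIntervalGraph_comap_intervalGraph {n : ℕ} {a b : V → ℝ} (hab : ∀ v, a v ≤ b v)
    (e : Fin n ≃ V) : IsIntervalGraph ((intervalGraph a b).comap e) :=
  ⟨a ∘ e, b ∘ e, fun i => hab (e i), fun i j hij => by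
    simp [intervalGraph, e.injective.ne hij]⟩

lemma intervalGraph_adj_of_point {a b : V → ℝ} {u v : V} (huv : u ≠ v) (hu : a u = b u) :
    (intervalGraph a b).Adj u v ↔ a v ≤ a u ∧ a u ≤ b v := by
  simp only [intervalGraph, ne_eq, huv, not_false_eq_true, true_and, ← hu, Icc_self,
    singleton_inter_nonempty, mem_Icc]

end IntervalGraph

section Encoding

variable {k m : ℕ}

/-- Vertices `inl t` and `inr (inl t)` are the points `-(t + 1)` and `t + 1`; vertex
`inr (inr j)` is the interval `[-(p + 1), q + 1]` where `f j = (p, q)`, so that it meets exactly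
the first `p + 1` left points and the first `q + 1` right points. -/
def codeLeft (f : Fin m → Fin k × Fin k) : Fin k ⊕ Fin k ⊕ Fin m → ℝ
  | .inl t => -(t + 1)
  | .inr (.inl t) => t + 1
  | .inr (.inr j) => -((f j).1 + 1)

def codeRight (f : Fin m → Fin k × Fin k) : Fin k ⊕ Fin k ⊕ Fin m → ℝ
  | .inl t => -(t + 1)
  | .inr (.inl t) => t + 1
  | .inr (.inr j) => (f j).2 + 1

lemma codeLeft_le_codeRight (f : Fin m → Fin k × Fin k) (v : Fin k ⊕ Fin k ⊕ Fin m) :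
    codeLeft f v ≤ codeRight f v := by
  rcases v with t | t | j <;> simp only [codeLeft, codeRight, le_refl]
  linarith [Nat.cast_nonneg (α := ℝ) (f j).1, Nat.cast_nonneg (α := ℝ) (f j).2]

def codeGraph (f : Fin m → Fin k × Fin k) : SimpleGraph (Fin k ⊕ Fin k ⊕ Fin m) :=
  intervalGraph (codeLeft f) (codeRight f)

lemma codeGraph_adj_inl_iff (f : Fin m → Fin k × Fin k) (t : Fin k) (j : Fin m) :
    (codeGraph f).Adj (.inl t) (.inr (.inr j)) ↔ t ≤ (f j).1 := by
  rw [codeGraph,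
    intervalGraph_adj_of_point (a := codeLeft f) (b := codeRight f) Sum.inl_ne_inr rfl]
  simp only [codeLeft, codeRight, neg_le_neg_iff, add_le_add_iff_right, Fin.le_iff_val_le_val]
  constructor
  · exact fun h => by exact_mod_cast h.1
  · intro h
    exact ⟨by exact_mod_cast h,
      by linarith [Nat.cast_nonneg (α := ℝ) t, Nat.cast_nonneg (α := ℝ) (f j).2]⟩

lemma codeGraph_adj_inr_inl_iff (f : Fin m → Fin k × Fin k) (t : Fin k) (j : Fin m) :
    (codeGraph f).Adj (.inr (.inl t)) (.inr (.inr j)) ↔ t ≤ (f j).2 := by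
  rw [codeGraph, intervalGraph_adj_of_point (a := codeLeft f) (b := codeRight f) (by simp) rfl]
  simp only [codeLeft, codeRight, add_le_add_iff_right, Fin.le_iff_val_le_val]
  constructor
  · exact fun h => by exact_mod_cast h.2
  · intro h
    exact ⟨by linarith [Nat.cast_nonneg (α := ℝ) t, Nat.cast_nonneg (α := ℝ) (f j).1],
      by exact_mod_cast h⟩

lemma codeGraph_injective : Function.Injective (codeGraph (k := k) (m := m)) := by
  intro f g h
  funext j
  refine Prod.ext (eq_of_forall_le_iff fun t => ?_) (eq_of_forall_le_iff fun t => ?_)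
  · rw [← codeGraph_adj_inl_iff, ← codeGraph_adj_inl_iff, h]
  · rw [← codeGraph_adj_inr_inl_iff, ← codeGraph_adj_inr_inl_iff, h]

end Encoding

lemma pow_le_card_isIntervalGraph {k n : ℕ} (hkn : 2 * k ≤ n) :
    (k * k) ^ (n - 2 * k) ≤ Nat.card {G : SimpleGraph (Fin n) // IsIntervalGraph G} := by
  let e : Fin n ≃ Fin k ⊕ Fin k ⊕ Fin (n - 2 * k) :=
    (Fintype.equivFinOfCardEq (by simp; omega)).symm
  have hinj : Function.Injective fun f => (codeGraph f).comap e := by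
    intro f g h
    apply codeGraph_injective
    simpa [SimpleGraph.comap_symm, (SimpleGraph.map_injective _).eq_iff] using
      congrArg (SimpleGraph.comap e.symm) h
  calc (k * k) ^ (n - 2 * k) = Nat.card (Fin (n - 2 * k) → Fin k × Fin k) := by simp
    _ ≤ _ := Nat.card_le_card_of_injective
        (fun f => ⟨(codeGraph f).comap e,
          isIntervalGraph_comap_intervalGraph (codeLeft_le_codeRight f) e⟩)
        fun f g h => hinj (congrArg Subtype.val h)

/-- A labelled interval graph is determined by its isomorphism class together with an
isomorphism from the chosen representative of that class. -/
lemma card_isIntervalGraph_le (n : ℕ) :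
    Nat.card {G : SimpleGraph (Fin n) // IsIntervalGraph G} ≤
      intervalGraphCount n * n.factorial := by
  let Φ (G : {G : SimpleGraph (Fin n) // IsIntervalGraph G}) :
      Quotient (intervalIsoSetoid n) × Equiv.Perm (Fin n) :=
    (⟦G⟧, (Classical.choice (Quotient.mk_out (s := intervalIsoSetoid n) G)).toEquiv)
  have hΦ (G) (i j : Fin n) :
      G.1.Adj i j ↔ (Φ G).1.out.1.Adj ((Φ G).2.symm i) ((Φ G).2.symm j) :=
    (Classical.choice (Quotient.mk_out (s := intervalIsoSetoid n) G)).symm.map_adj_iff.symm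
  have hinj : Function.Injective Φ := fun G H h => by
    ext i j
    rw [hΦ G, hΦ H, h]
  calc _ ≤ Nat.card (Quotient (intervalIsoSetoid n) × Equiv.Perm (Fin n)) :=
        Nat.card_le_card_of_injective Φ hinj
    _ = intervalGraphCount n * n.factorial := by
      simp [intervalGraphCount, Fintype.card_perm]

lemma pow_le_intervalGraphCount_mul_factorial {k n : ℕ} (hkn : 2 * k ≤ n) :
    (k * k) ^ (n - 2 * k) ≤ intervalGraphCount n * n.factorial :=
  (pow_le_card_isIntervalGraph hkn).trans (card_isIntervalGraph_le n)

lemma two_mul_sub_mul_log_le_log_intervalGraphCount {k n : ℕ} (hk : 0 < k) (hkn : 2 * k ≤ n) :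
    2 * ((n : ℝ) - 2 * k) * log k ≤ log (intervalGraphCount n) + n * log n := by
  have hcount : ((k : ℝ) * k) ^ (n - 2 * k) ≤ intervalGraphCount n * (n : ℝ) ^ n :=
    calc ((k : ℝ) * k) ^ (n - 2 * k) ≤ intervalGraphCount n * (n.factorial : ℝ) := by
          exact_mod_cast pow_le_intervalGraphCount_mul_factorial hkn
      _ ≤ intervalGraphCount n * (n : ℝ) ^ n := by
          gcongr; exact_mod_cast Nat.factorial_le_pow n
  have hpos : 0 < ((k : ℝ) * k) ^ (n - 2 * k) := by positivity
  have hI : (0 : ℝ) < intervalGraphCount n :=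
    pos_of_mul_pos_left (hpos.trans_le hcount) (by positivity)
  have hn : (0 : ℝ) < n := by exact_mod_cast hk.trans_le (by omega)
  have := log_le_log hpos hcount
  rw [log_pow, log_mul hI.ne' (by positivity), log_mul (by positivity) (by positivity), log_pow,
    Nat.cast_sub hkn] at this
  push_cast at this
  linarith

theorem log_interval_graph_count_lower :
    ∃ (C : ℝ) (N : ℕ), ∀ n : ℕ, N ≤ n →
      (n : ℝ) * Real.log n - 2 * n * Real.log (Real.log n) - C * n ≤
        Real.log (intervalGraphCount n) := by
  refine ⟨4 + 2 * log 2, 8, fun n hn => ?_⟩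
  set L := log n
  have hn8 : (8 : ℝ) ≤ n := by exact_mod_cast hn
  have hL : 2 ≤ L := calc
    (2 : ℝ) ≤ log (2 ^ 3) := by rw [log_pow]; push_cast; linarith [log_two_gt_d9]
    _ ≤ L := log_le_log (by norm_num) (by linarith)
  have hLn : L ≤ n := log_le_self (by positivity)
  set k := ⌊n / L⌋₊
  have hk_le : (k : ℝ) ≤ n / L := Nat.floor_le (by positivity)
  have hx : 1 ≤ n / L := (one_le_div (by positivity)).2 hLn
  have hk_ge : n / L / 2 ≤ k := Nat.div_two_le_floor hx
  have hk : 0 < k := Nat.floor_pos.2 hx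
  have hkL : k * L ≤ n := (le_div_iff₀ (by positivity)).1 hk_le
  have hkn : 2 * (k : ℝ) ≤ n := by nlinarith
  have hcount := two_mul_sub_mul_log_le_log_intervalGraphCount hk (by exact_mod_cast hkn)
  have hlogk : L - log 2 - log L ≤ log k := by
    have := log_le_log (by positivity) hk_ge
    rw [log_div (by positivity) two_ne_zero, log_div (by positivity) (by positivity)] at this
    linarith
  have hlogL : 0 ≤ log 2 + log L := by
    linarith [log_nonneg one_le_two, log_nonneg (by linarith : (1 : ℝ) ≤ L)]
  have hmul := mul_le_mul_of_nonneg_left hlogk (by linarith : (0 : ℝ) ≤ n - 2 * k)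
  nlinarith [mul_nonneg (Nat.cast_nonneg (α := ℝ) k) hlogL]
end
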